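/- arXiv:1209.1064 — 4 statements merged into one kernel-verified Lean document; each statement's English description precedes it below -/
import Mathlib

section
/- Let H be an N×p real matrix, y ∈ ℝ^N, and let D be a p×p diagonal matrix with strictly positive diagonal entries. If s ∈ ℝ^p satisfies the fixed-point equation s = (D⁻¹ + I_p)⁻¹ (s + Hᵀ (y − H s)), then s = D Hᵀ (I_N + H D Hᵀ)⁻¹ y. (Both D⁻¹ + I_p and I_N + H D Hᵀ are positive definite, hence invertible.) -/
/-!
Multiplying the fixed-point equation by `D⁻¹ + I` and cancelling `s` gives
`D⁻¹ s = Hᵀ (y - H s)`, i.e. `(I + D Hᵀ H) s = D Hᵀ y`. The push-through identity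
`(I + D Hᵀ H) D Hᵀ = D Hᵀ (I + H D Hᵀ)` then identifies `(I + D Hᵀ H)⁻¹ D Hᵀ` with
`D Hᵀ (I + H D Hᵀ)⁻¹`; both inverses exist because `I + H D Hᵀ` is positive definite and, by
the Weinstein–Aronszajn identity, `I + D Hᵀ H` has the same determinant.
-/

open Matrix

namespace Matrix

variable {m n R : Type*} [Fintype m] [Fintype n] [DecidableEq m] [DecidableEq n] [CommRing R]

theorem mulVec_eq_of_eq_inv_mulVec {A : Matrix n n R} (hA : IsUnit A) {s v : n → R}
    (h : s = A⁻¹ *ᵥ v) : A *ᵥ s = v := by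
  rw [h, mulVec_mulVec, mul_nonsing_inv _ ((isUnit_iff_isUnit_det A).1 hA), one_mulVec]

theorem isUnit_one_add_mul_comm {A : Matrix m n R} {B : Matrix n m R}
    (h : IsUnit (1 + B * A)) : IsUnit (1 + A * B) := by
  rw [isUnit_iff_isUnit_det, det_one_add_mul_comm, ← isUnit_iff_isUnit_det]
  exact h

theorem one_add_mul_mul_comm (A : Matrix m n R) (B : Matrix n m R) :
    (1 + A * B) * A = A * (1 + B * A) := by
  simp only [Matrix.add_mul, Matrix.mul_add, Matrix.one_mul, Matrix.mul_one, Matrix.mul_assoc]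

theorem mul_inv_one_add_mul_comm {A : Matrix m n R} {B : Matrix n m R}
    (h : IsUnit (1 + B * A)) : A * (1 + B * A)⁻¹ = (1 + A * B)⁻¹ * A := by
  have h' := (isUnit_iff_isUnit_det _).1 (isUnit_one_add_mul_comm h)
  rw [isUnit_iff_isUnit_det] at h
  calc A * (1 + B * A)⁻¹ = (1 + A * B)⁻¹ * ((1 + A * B) * A) * (1 + B * A)⁻¹ := by
        rw [nonsing_inv_mul_cancel_left _ _ h']
    _ = (1 + A * B)⁻¹ * A := by
        rw [one_add_mul_mul_comm, ← Matrix.mul_assoc, mul_nonsing_inv_cancel_right _ _ h]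

end Matrix

section EMStep

variable {m n R : Type*} [Fintype m] [Fintype n] [DecidableEq n] [CommRing R]

/-- The EM iteration: E step `z = s + G (y - H s)`, M step `(D⁻¹ + I)⁻¹ z`; the paper has `G = Hᵀ`. -/
noncomputable def emStep (D : Matrix n n R) (G : Matrix n m R) (H : Matrix m n R) (y : m → R)
    (s : n → R) : n → R :=
  (D⁻¹ + 1)⁻¹ *ᵥ (s + G *ᵥ (y - H *ᵥ s))

variable {D : Matrix n n R} {G : Matrix n m R} {H : Matrix m n R} {y : m → R} {s : n → R}

theorem one_add_mul_mulVec_eq_of_isFixedPt_emStep (hD : IsUnit D) (hA : IsUnit (D⁻¹ + 1))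
    (hfix : Function.IsFixedPt (emStep D G H y) s) : (1 + D * G * H) *ᵥ s = (D * G) *ᵥ y := by
  have hinv : D⁻¹ *ᵥ s = G *ᵥ (y - H *ᵥ s) := by
    have := mulVec_eq_of_eq_inv_mulVec hA hfix.symm
    rwa [add_mulVec, one_mulVec, add_comm, add_right_inj] at this
  have hs : s = D *ᵥ (G *ᵥ (y - H *ᵥ s)) := by
    rw [← hinv, mulVec_mulVec, mul_nonsing_inv _ ((isUnit_iff_isUnit_det D).1 hD), one_mulVec]
  rw [add_mulVec, one_mulVec]
  nth_rewrite 1 [hs]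
  rw [mulVec_sub, mulVec_sub, mulVec_mulVec, mulVec_mulVec, mulVec_mulVec, sub_add_cancel]

theorem eq_mul_inv_mulVec_of_isFixedPt_emStep [DecidableEq m] (hD : IsUnit D)
    (hA : IsUnit (D⁻¹ + 1)) (hM : IsUnit (1 + H * D * G))
    (hfix : Function.IsFixedPt (emStep D G H y) s) :
    s = (D * G * (1 + H * D * G)⁻¹) *ᵥ y := by
  rw [Matrix.mul_assoc H] at hM ⊢
  have hB := (isUnit_iff_isUnit_det _).1 (isUnit_one_add_mul_comm hM)
  rw [mul_inv_one_add_mul_comm hM, ← mulVec_mulVec,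
    ← one_add_mul_mulVec_eq_of_isFixedPt_emStep hD hA hfix, mulVec_mulVec,
    nonsing_inv_mul _ hB, one_mulVec]

end EMStep

/-- **Theorem 1 (fixed-point of the MP-EM iteration).**
If `s` satisfies the fixed-point equation `s = (D⁻¹ + I)⁻¹ (s + Hᵀ (y − H s))`
for a diagonal matrix `D` with strictly positive diagonal entries, then
`s = D Hᵀ (I + H D Hᵀ)⁻¹ y`. -/
theorem em_fixed_point_is_bayes_estimator {N p : ℕ}
    (H : Matrix (Fin N) (Fin p) ℝ) (y : Fin N → ℝ)
    (d : Fin p → ℝ) (hd : ∀ i, 0 < d i) (s : Fin p → ℝ)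
    (hfix : s = ((Matrix.diagonal d)⁻¹ + 1)⁻¹ *ᵥ (s + Hᵀ *ᵥ (y - H *ᵥ s))) :
    s = (Matrix.diagonal d * Hᵀ * (1 + H * Matrix.diagonal d * Hᵀ)⁻¹) *ᵥ y := by
  have hD : (diagonal d).PosDef := .diagonal hd
  have hM : (1 + H * diagonal d * Hᵀ).PosDef := by
    simpa only [conjTranspose_eq_transpose_of_trivial] using
      PosDef.one.add_posSemidef (hD.posSemidef.mul_mul_conjTranspose_same H)
  exact eq_mul_inv_mulVec_of_isFixedPt_emStep hD.isUnit (hD.inv.add .one).isUnit hM.isUnit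
    hfix.symm
end

section
/- Let H be an N×p real matrix with I_p − Hᵀ H positive semidefinite, σ² > 0, y ∈ ℝ^N, γ² > 0, ε² > 0, and let P : {0,1}^p → (0, ∞). For q ∈ {0,1}^p let D(q) = diag{(γ²)^{q_1}(ε²)^{1−q_1}, …, (γ²)^{q_p}(ε²)^{1−q_p}}, and define F(q, s) = −(‖y − H s‖₂² + sᵀ D(q)⁻¹ s)/(2σ²) + ln P(q) + ½ ln(ε²/γ²) · Σ_{i=1}^p q_i. Given (q⁰, s⁰) ∈ {0,1}^p × ℝ^p, set z = s⁰ + Hᵀ (y − H s⁰) and Q(q, s) = −(‖z − s‖₂² + sᵀ D(q)⁻¹ s)/(2σ²) + ln P(q) + ½ ln(ε²/γ²) · Σ_{i=1}^p q_i. If (q¹, s¹) ∈ {0,1}^p × ℝ^p satisfies Q(q¹, s¹) ≥ Q(q⁰, s⁰), then F(q¹, s¹) ≥ F(q⁰, s⁰). -/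
/-!
`F` and `Q` differ only in their data-fit terms: `F q s = Q q s + g s / (2σ²)` with
`g s = ‖z - s‖² - ‖y - H s‖²`. Since `z = s⁰ + Hᵀ (y - H s⁰)` is a Landweber step from `s⁰`,
expanding around `s⁰` gives `g s = g s⁰ + (s - s⁰)ᵀ (I - HᵀH) (s - s⁰)`, so `g` is minimal at `s⁰`
when `I - HᵀH ⪰ 0`, and an increase of `Q` from `(q⁰, s⁰)` is an increase of `F`.
-/

open Matrix

namespace Matrix

variable {m n R : Type*} [Fintype m] [Fintype n]

theorem sum_sub_sq_eq_dotProduct [CommRing R] (a b : n → R) :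
    ∑ i, (a i - b i) ^ 2 = (a - b) ⬝ᵥ (a - b) := by
  simp only [dotProduct, Pi.sub_apply, sq]

theorem transpose_mulVec_dotProduct [CommRing R] (H : Matrix m n R) (v : m → R)
    (u : n → R) : Hᵀ *ᵥ v ⬝ᵥ u = v ⬝ᵥ H *ᵥ u := by
  rw [mulVec_transpose, dotProduct_mulVec]

theorem dotProduct_one_sub_transpose_mul_self_mulVec [CommRing R] [DecidableEq n]
    (H : Matrix m n R) (e : n → R) :
    e ⬝ᵥ (1 - Hᵀ * H) *ᵥ e = e ⬝ᵥ e - H *ᵥ e ⬝ᵥ H *ᵥ e := by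
  rw [sub_mulVec, dotProduct_sub, one_mulVec, ← mulVec_mulVec, dotProduct_comm e (Hᵀ *ᵥ _),
    transpose_mulVec_dotProduct]

theorem landweber_gap_eq [CommRing R] [DecidableEq n] (H : Matrix m n R) (y : m → R)
    (s₀ s z : n → R) (hz : z = s₀ + Hᵀ *ᵥ (y - H *ᵥ s₀)) :
    (z - s) ⬝ᵥ (z - s) - (y - H *ᵥ s) ⬝ᵥ (y - H *ᵥ s) =
      (z - s₀) ⬝ᵥ (z - s₀) - (y - H *ᵥ s₀) ⬝ᵥ (y - H *ᵥ s₀)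
        + (s - s₀) ⬝ᵥ (1 - Hᵀ * H) *ᵥ (s - s₀) := by
  subst hz
  set r := y - H *ᵥ s₀
  set e := s - s₀
  have hzs : s₀ + Hᵀ *ᵥ r - s = Hᵀ *ᵥ r - e := by simp only [e]; abel
  have hys : y - H *ᵥ s = r - H *ᵥ e := by simp only [r, e, mulVec_sub]; abel
  have hzs₀ : s₀ + Hᵀ *ᵥ r - s₀ = Hᵀ *ᵥ r := add_sub_cancel_left _ _
  rw [hzs, hys, hzs₀, dotProduct_one_sub_transpose_mul_self_mulVec]
  simp only [sub_dotProduct, dotProduct_sub, dotProduct_comm e (Hᵀ *ᵥ r),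
    transpose_mulVec_dotProduct, dotProduct_comm (H *ᵥ e) r]
  ring

theorem landweber_gap_le [DecidableEq n] (H : Matrix m n ℝ) (hH : (1 - Hᵀ * H).PosSemidef)
    (y : m → ℝ) (s₀ s z : n → ℝ) (hz : z = s₀ + Hᵀ *ᵥ (y - H *ᵥ s₀)) :
    (z - s₀) ⬝ᵥ (z - s₀) - (y - H *ᵥ s₀) ⬝ᵥ (y - H *ᵥ s₀) ≤
      (z - s) ⬝ᵥ (z - s) - (y - H *ᵥ s) ⬝ᵥ (y - H *ᵥ s) := by
  rw [landweber_gap_eq H y s₀ s z hz, le_add_iff_nonneg_right]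
  simpa using hH.dotProduct_mulVec_nonneg (s - s₀)

end Matrix

theorem em_monotonicity_general {N p : ℕ} (H : Matrix (Fin N) (Fin p) ℝ)
    (hH : ((1 : Matrix (Fin p) (Fin p) ℝ) - Hᵀ * H).PosSemidef)
    (σ2 : ℝ) (hσ : 0 < σ2) (y : Fin N → ℝ)
    (γ2 ε2 : ℝ)
    (P : (Fin p → Bool) → ℝ)
    (D : (Fin p → Bool) → Matrix (Fin p) (Fin p) ℝ)
    (F Q : (Fin p → Bool) → (Fin p → ℝ) → ℝ)
    (q0 : Fin p → Bool) (s0 : Fin p → ℝ)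
    (z : Fin p → ℝ) (hz : z = s0 + Hᵀ *ᵥ (y - H *ᵥ s0))
    (hF : ∀ q s, F q s =
        -((∑ i, (y i - (H *ᵥ s) i) ^ 2) + s ⬝ᵥ ((D q)⁻¹ *ᵥ s)) / (2 * σ2)
          + Real.log (P q)
          + (1 / 2) * Real.log (ε2 / γ2) * (∑ i, if q i then (1 : ℝ) else 0))
    (hQ : ∀ q s, Q q s =
        -((∑ i, (z i - s i) ^ 2) + s ⬝ᵥ ((D q)⁻¹ *ᵥ s)) / (2 * σ2)
          + Real.log (P q)
          + (1 / 2) * Real.log (ε2 / γ2) * (∑ i, if q i then (1 : ℝ) else 0))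
    (q1 : Fin p → Bool) (s1 : Fin p → ℝ)
    (h : Q q0 s0 ≤ Q q1 s1) :
    F q0 s0 ≤ F q1 s1 := by
  have hFQ : ∀ q s, F q s =
      Q q s + ((z - s) ⬝ᵥ (z - s) - (y - H *ᵥ s) ⬝ᵥ (y - H *ᵥ s)) / (2 * σ2) := by
    intro q s
    rw [hF, hQ]
    simp only [sum_sub_sq_eq_dotProduct]
    ring
  have hgap := div_le_div_of_nonneg_right (landweber_gap_le H hH y s0 s1 z hz)
    (by positivity : 0 ≤ 2 * σ2)
  rw [hFQ, hFQ]
  linarith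

/-- Monotonicity of the MP-EM iteration: if the expected complete-data
log-posterior `Q` does not decrease from `(q⁰, s⁰)` to `(q¹, s¹)`, then the
log-posterior `F` does not decrease either. -/
theorem em_monotonicity {N p : ℕ} (H : Matrix (Fin N) (Fin p) ℝ)
    (hH : ((1 : Matrix (Fin p) (Fin p) ℝ) - Hᵀ * H).PosSemidef)
    (σ2 : ℝ) (hσ : 0 < σ2) (y : Fin N → ℝ)
    (γ2 ε2 : ℝ) (hγ : 0 < γ2) (hε : 0 < ε2)
    (P : (Fin p → Bool) → ℝ) (hP : ∀ q, 0 < P q)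
    (D : (Fin p → Bool) → Matrix (Fin p) (Fin p) ℝ)
    (hD : ∀ q, D q = Matrix.diagonal fun i => if q i then γ2 else ε2)
    (F Q : (Fin p → Bool) → (Fin p → ℝ) → ℝ)
    (q0 : Fin p → Bool) (s0 : Fin p → ℝ)
    (z : Fin p → ℝ) (hz : z = s0 + Hᵀ *ᵥ (y - H *ᵥ s0))
    (hF : ∀ q s, F q s =
        -((∑ i, (y i - (H *ᵥ s) i) ^ 2) + s ⬝ᵥ ((D q)⁻¹ *ᵥ s)) / (2 * σ2)
          + Real.log (P q)
          + (1 / 2) * Real.log (ε2 / γ2) * (∑ i, if q i then (1 : ℝ) else 0))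
    (hQ : ∀ q s, Q q s =
        -((∑ i, (z i - s i) ^ 2) + s ⬝ᵥ ((D q)⁻¹ *ᵥ s)) / (2 * σ2)
          + Real.log (P q)
          + (1 / 2) * Real.log (ε2 / γ2) * (∑ i, if q i then (1 : ℝ) else 0))
    (q1 : Fin p → Bool) (s1 : Fin p → ℝ)
    (h : Q q0 s0 ≤ Q q1 s1) :
    F q0 s0 ≤ F q1 s1 :=
  em_monotonicity_general H hH σ2 hσ y γ2 ε2 P D F Q q0 s0 z hz hF hQ q1 s1 h
end

section
/- Let H be an N×p real matrix whose spectral norm (largest singular value) is strictly less than 1, let σ² > 0, y ∈ ℝ^N, s ∈ ℝ^p, and set C = σ² (I_N − H Hᵀ). Then C, Hᵀ C⁻¹ H + σ⁻² I_p, I_N − HHᵀ, and I_p − HᵀH are invertible, and (Hᵀ C⁻¹ H + σ⁻² I_p)⁻¹ (Hᵀ C⁻¹ y + σ⁻² s) = s + Hᵀ (y − H s). -/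
/-!
Write `A = 1 - HᵀH` and `B = 1 - HHᵀ`. The norm bound makes `A` positive definite, and
`det A = det B` (Weinstein–Aronszajn), so `B` is invertible too. The identity
`A⁻¹ = 1 + Hᵀ B⁻¹ H` turns the posterior precision `HᵀC⁻¹H + σ⁻²` into `σ⁻² A⁻¹`, and the
push-through relation `A Hᵀ = Hᵀ B` cancels `B⁻¹` from the posterior mean `A (Hᵀ B⁻¹ y + s)`.
-/

open Matrix

namespace Matrix

variable {m n : Type*} [Fintype m] [Fintype n] [DecidableEq n]

section Field

variable {K : Type*} [Field K]

theorem isUnit_smul_of_ne_zero {k : K} (hk : k ≠ 0) {A : Matrix n n K} (hA : IsUnit A) :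
    IsUnit (k • A) :=
  hA.smul (Units.mk0 k hk)

theorem inv_smul_of_ne_zero {k : K} (hk : k ≠ 0) {A : Matrix n n K} (hA : IsUnit A) :
    (k • A)⁻¹ = k⁻¹ • A⁻¹ := by
  simpa [Units.smul_def] using inv_smul' A (Units.mk0 k hk) ((isUnit_iff_isUnit_det A).mp hA)

end Field

section CommRing

variable {R : Type*} [CommRing R] [DecidableEq m]

theorem isUnit_one_sub_mul_comm (A : Matrix m n R) (B : Matrix n m R) :
    IsUnit (1 - A * B) ↔ IsUnit (1 - B * A) := by
  rw [isUnit_iff_isUnit_det, isUnit_iff_isUnit_det, det_one_sub_mul_comm]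

theorem one_sub_mul_mul_comm (A : Matrix m n R) (B : Matrix n m R) :
    (1 - B * A) * B = B * (1 - A * B) := by
  rw [Matrix.sub_mul, Matrix.mul_sub, Matrix.one_mul, Matrix.mul_one, Matrix.mul_assoc]

theorem inv_one_sub_mul_comm (A : Matrix m n R) (B : Matrix n m R) (h : IsUnit (1 - A * B)) :
    (1 - B * A)⁻¹ = 1 + B * (1 - A * B)⁻¹ * A := by
  refine inv_eq_right_inv ?_
  calc (1 - B * A) * (1 + B * (1 - A * B)⁻¹ * A)
      = 1 - B * A + (1 - B * A) * B * (1 - A * B)⁻¹ * A := by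
        rw [Matrix.mul_add, Matrix.mul_one, Matrix.mul_assoc, Matrix.mul_assoc, Matrix.mul_assoc]
    _ = 1 - B * A + B * ((1 - A * B) * (1 - A * B)⁻¹) * A := by
        rw [one_sub_mul_mul_comm, Matrix.mul_assoc B]
    _ = 1 := by
        rw [mul_nonsing_inv _ ((isUnit_iff_isUnit_det _).mp h), Matrix.mul_one, sub_add_cancel]

theorem one_sub_mul_mulVec_mulVec_inv (A : Matrix m n R) (B : Matrix n m R)
    (h : IsUnit (1 - A * B)) (v : m → R) :
    (1 - B * A) *ᵥ (B *ᵥ ((1 - A * B)⁻¹ *ᵥ v)) = B *ᵥ v := by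
  rw [mulVec_mulVec, mulVec_mulVec, one_sub_mul_mul_comm, Matrix.mul_assoc,
    mul_nonsing_inv _ ((isUnit_iff_isUnit_det _).mp h), Matrix.mul_one]

end CommRing

theorem posDef_one_sub_transpose_mul_self (H : Matrix m n ℝ)
    (hH : ∀ x : n → ℝ, x ≠ 0 → ∑ i, ((H *ᵥ x) i) ^ 2 < ∑ j, (x j) ^ 2) :
    (1 - Hᵀ * H).PosDef := by
  refine posDef_iff_dotProduct_mulVec.mpr ⟨?_, fun x hx => ?_⟩
  · simpa using isHermitian_one.sub (isHermitian_conjTranspose_mul_self H)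
  · have hquad : star x ⬝ᵥ ((1 - Hᵀ * H) *ᵥ x) = x ⬝ᵥ x - (H *ᵥ x) ⬝ᵥ (H *ᵥ x) := by
      rw [star_trivial, sub_mulVec, one_mulVec, dotProduct_sub, ← mulVec_mulVec,
        dotProduct_mulVec, vecMul_transpose]
    rw [hquad, sub_pos]
    simpa [dotProduct, sq] using hH x hx

end Matrix

/-- If the spectral norm of `H` is strictly less than 1 (i.e. `‖Hx‖₂ < ‖x‖₂`
for all `x ≠ 0`), then with `C = σ²(I_N − HHᵀ)` all the matrices `C`,
`HᵀC⁻¹H + σ⁻²I_p`, `I_N − HHᵀ`, `I_p − HᵀH` are invertible, and the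
conditional missing-data mean simplifies to the backprojection form:
`(HᵀC⁻¹H + σ⁻²I_p)⁻¹ (HᵀC⁻¹y + σ⁻²s) = s + Hᵀ(y − Hs)`. -/
theorem missing_data_mean_backprojection {N p : ℕ}
    (H : Matrix (Fin N) (Fin p) ℝ)
    (hH : ∀ x : Fin p → ℝ, x ≠ 0 → ∑ i, ((H *ᵥ x) i) ^ 2 < ∑ j, (x j) ^ 2)
    (σ2 : ℝ) (hσ : 0 < σ2) (y : Fin N → ℝ) (s : Fin p → ℝ)
    (C : Matrix (Fin N) (Fin N) ℝ)
    (hC : C = σ2 • ((1 : Matrix (Fin N) (Fin N) ℝ) - H * Hᵀ)) :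
    IsUnit C
      ∧ IsUnit (Hᵀ * C⁻¹ * H + σ2⁻¹ • (1 : Matrix (Fin p) (Fin p) ℝ))
      ∧ IsUnit ((1 : Matrix (Fin N) (Fin N) ℝ) - H * Hᵀ)
      ∧ IsUnit ((1 : Matrix (Fin p) (Fin p) ℝ) - Hᵀ * H)
      ∧ (Hᵀ * C⁻¹ * H + σ2⁻¹ • (1 : Matrix (Fin p) (Fin p) ℝ))⁻¹
          *ᵥ (Hᵀ *ᵥ (C⁻¹ *ᵥ y) + σ2⁻¹ • s)
        = s + Hᵀ *ᵥ (y - H *ᵥ s) := by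
  have hσ0 : σ2 ≠ 0 := hσ.ne'
  have hA : IsUnit (1 - Hᵀ * H) := (posDef_one_sub_transpose_mul_self H hH).isUnit
  have hB : IsUnit (1 - H * Hᵀ) := (isUnit_one_sub_mul_comm Hᵀ H).mp hA
  have hCinv : C⁻¹ = σ2⁻¹ • (1 - H * Hᵀ)⁻¹ := hC ▸ inv_smul_of_ne_zero hσ0 hB
  have hT : Hᵀ * C⁻¹ * H + σ2⁻¹ • 1 = σ2⁻¹ • (1 - Hᵀ * H)⁻¹ := by
    rw [hCinv, inv_one_sub_mul_comm H Hᵀ hB, Matrix.mul_smul, Matrix.smul_mul, smul_add,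
      add_comm]
  have hTinv : (Hᵀ * C⁻¹ * H + σ2⁻¹ • 1)⁻¹ = σ2 • (1 - Hᵀ * H) := by
    rw [hT, inv_smul_of_ne_zero (inv_ne_zero hσ0) (isUnit_nonsing_inv_iff.mpr hA), inv_inv,
      nonsing_inv_nonsing_inv _ ((isUnit_iff_isUnit_det _).mp hA)]
  refine ⟨hC ▸ isUnit_smul_of_ne_zero hσ0 hB,
    hT ▸ isUnit_smul_of_ne_zero (inv_ne_zero hσ0) (isUnit_nonsing_inv_iff.mpr hA), hB, hA, ?_⟩
  calc (Hᵀ * C⁻¹ * H + σ2⁻¹ • 1)⁻¹ *ᵥ (Hᵀ *ᵥ (C⁻¹ *ᵥ y) + σ2⁻¹ • s)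
      = (1 - Hᵀ * H) *ᵥ (Hᵀ *ᵥ ((1 - H * Hᵀ)⁻¹ *ᵥ y)) + (1 - Hᵀ * H) *ᵥ s := by
        rw [hTinv, hCinv, smul_mulVec, smul_mulVec, mulVec_smul, ← smul_add, mulVec_smul,
          smul_smul, mul_inv_cancel₀ hσ0, one_smul, mulVec_add]
    _ = s + Hᵀ *ᵥ (y - H *ᵥ s) := by
        rw [one_sub_mul_mulVec_mulVec_inv H Hᵀ hB, sub_mulVec, one_mulVec, mulVec_sub,
          mulVec_mulVec]
        abel
end

section
/- Let z ∈ ℝ, σ² > 0, ε = √(ε²) > 0, γ = √(γ²) > 0, and let w₀ ≥ 0 and w₁ ≥ 0. Then the supremum over (q, s) ∈ {0,1} × ℝ of N(z | s, σ²) · [w₁ · N(s | 0, γ² σ²)]^q · [w₀ · N(s | 0, ε² σ²)]^{1−q}, where N(x | μ, v) = (2πv)^{−1/2} exp(−(x−μ)²/(2v)), equals (2πσ²)⁻¹ · max{ (w₀/ε) · exp(−z²/(2σ²(1 + ε²))), (w₁/γ) · exp(−z²/(2σ²(1 + γ²))) }. -/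
/-!
For a fixed branch `q`, with `t = ε` or `t = γ`, completing the square in `s` writes
`N(z | s, σ²) · N(s | 0, t²σ²)` as `(2πσ²)⁻¹ t⁻¹ exp(−z²/(2σ²(1 + t²)))` times
`exp(−(1 + t²)(s − t²z/(1 + t²))²/(2t²σ²)) ≤ 1`, with equality at `s = t²z/(1 + t²)`.
So each branch attains its supremum, and the supremum over `q` is the larger of the two.
-/

/-- The univariate Gaussian pdf `N(x | μ, v) = (2πv)^{−1/2} exp(−(x−μ)²/(2v))`. -/
noncomputable def gaussPdf (x μ v : ℝ) : ℝ :=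
  (Real.sqrt (2 * Real.pi * v))⁻¹ * Real.exp (-(x - μ) ^ 2 / (2 * v))

open Real

theorem Set.range_bool_prod {α β : Type*} (f : Bool × α → β) :
    Set.range f = Set.range (fun a => f (false, a)) ∪ Set.range (fun a => f (true, a)) := by
  ext b
  simp only [Set.mem_union, Set.mem_range, Prod.exists, Bool.exists_bool]

lemma gaussPdf_mul_gaussPdf_mul_sq {v t : ℝ} (hv : 0 < v) (ht : 0 < t) (z s : ℝ) :
    gaussPdf z s v * gaussPdf s 0 (t ^ 2 * v) =
      (2 * π * v)⁻¹ * t⁻¹ * exp (-z ^ 2 / (2 * v * (1 + t ^ 2))) *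
        exp (-((1 + t ^ 2) * (s - t ^ 2 * z / (1 + t ^ 2)) ^ 2 / (2 * t ^ 2 * v))) := by
  have hsqrt : √(2 * π * v) * √(2 * π * (t ^ 2 * v)) = 2 * π * v * t := by
    rw [← sqrt_mul (by positivity), show 2 * π * v * (2 * π * (t ^ 2 * v)) = (2 * π * v * t) ^ 2 by
      ring, sqrt_sq (by positivity)]
  have hexp : -(z - s) ^ 2 / (2 * v) + -(s - 0) ^ 2 / (2 * (t ^ 2 * v)) =
      -z ^ 2 / (2 * v * (1 + t ^ 2)) +
        -((1 + t ^ 2) * (s - t ^ 2 * z / (1 + t ^ 2)) ^ 2 / (2 * t ^ 2 * v)) := by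
    field_simp
    ring
  calc gaussPdf z s v * gaussPdf s 0 (t ^ 2 * v)
      = (√(2 * π * v) * √(2 * π * (t ^ 2 * v)))⁻¹ *
          exp (-(z - s) ^ 2 / (2 * v) + -(s - 0) ^ 2 / (2 * (t ^ 2 * v))) := by
        rw [gaussPdf, gaussPdf, exp_add, mul_inv]; ring
    _ = _ := by rw [hsqrt, hexp, exp_add, mul_inv, mul_inv]; ring

lemma isGreatest_range_gaussPdf_mul_gaussPdf_mul_sq {v t : ℝ} (hv : 0 < v) (ht : 0 < t)
    {w : ℝ} (hw : 0 ≤ w) (z : ℝ) :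
    IsGreatest (Set.range fun s => gaussPdf z s v * (w * gaussPdf s 0 (t ^ 2 * v)))
      ((2 * π * v)⁻¹ * (w / t * exp (-z ^ 2 / (2 * v * (1 + t ^ 2))))) := by
  have key (s : ℝ) : gaussPdf z s v * (w * gaussPdf s 0 (t ^ 2 * v)) =
      (2 * π * v)⁻¹ * (w / t * exp (-z ^ 2 / (2 * v * (1 + t ^ 2)))) *
        exp (-((1 + t ^ 2) * (s - t ^ 2 * z / (1 + t ^ 2)) ^ 2 / (2 * t ^ 2 * v))) := by
    rw [mul_left_comm, gaussPdf_mul_gaussPdf_mul_sq hv ht]; ring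
  refine ⟨⟨t ^ 2 * z / (1 + t ^ 2), by simp [key]⟩, ?_⟩
  rintro _ ⟨s, rfl⟩
  dsimp only
  rw [key]
  refine mul_le_of_le_one_right (by positivity) (exp_le_one_iff.mpr ?_)
  exact neg_nonpos.mpr (by positivity)

/-- Closed form of the max-product messages: the supremum over
`(q, s) ∈ {0,1} × ℝ` of `N(z|s,σ²)·[w₁N(s|0,γ²σ²)]^q·[w₀N(s|0,ε²σ²)]^{1−q}`
equals `(2πσ²)⁻¹ max{(w₀/ε)exp(−z²/(2σ²(1+ε²))), (w₁/γ)exp(−z²/(2σ²(1+γ²)))}`. -/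
theorem max_product_message_value (z σ2 ε γ w0 w1 : ℝ)
    (hσ : 0 < σ2) (hε : 0 < ε) (hγ : 0 < γ) (hw0 : 0 ≤ w0) (hw1 : 0 ≤ w1) :
    IsGreatest
      (Set.range fun x : Bool × ℝ =>
        gaussPdf z x.2 σ2 *
          (if x.1 then w1 * gaussPdf x.2 0 (γ ^ 2 * σ2)
           else w0 * gaussPdf x.2 0 (ε ^ 2 * σ2)))
      ((2 * Real.pi * σ2)⁻¹ *
        max (w0 / ε * Real.exp (-z ^ 2 / (2 * σ2 * (1 + ε ^ 2))))
            (w1 / γ * Real.exp (-z ^ 2 / (2 * σ2 * (1 + γ ^ 2))))) := by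
  rw [Set.range_bool_prod, mul_max_of_nonneg _ _ (by positivity)]
  exact (isGreatest_range_gaussPdf_mul_gaussPdf_mul_sq hσ hε hw0 z).union
    (isGreatest_range_gaussPdf_mul_gaussPdf_mul_sq hσ hγ hw1 z)
end
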